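/- Let n ≥ 1 and let f_n denote the n-th Hermite function. Define the Wigner integrals G_m(x,k) = (2π)^{−1} · ∫_ℝ f_m(x + s/2) · f_m(x − s/2) · e^{−i·k·s} ds for m ∈ ℕ, and H_n(x,k) = (2π)^{−1} · ∫_ℝ f_n(x + s/2) · f_{n−1}(x − s/2) · e^{−i·k·s} ds. Then for every (x,k) ∈ ℝ² with (x,k) ≠ (0,0): H_n(x,k) = √(n/2) · ((x − i·k)/(x² + k²)) · (G_n(x,k) + G_{n−1}(x,k)). Equivalently, this is the paper's closed form for the off-diagonal Wigner matrix element, W₁₂ⁿ = (i·n/(2ω_n)) · ((x − i·k)/(x² + k²)) · (g_n + g_{n−1}). -/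

import Mathlib

open Real Complex MeasureTheory

/-- The `n`-th Hermite function `f_n(x) = (2ⁿ n! √π)^{-1/2} e^{-x²/2} H_n(x)`, where
`H_n(x) = 2^{n/2} He_n(x√2)` and `He_n` is the probabilists' Hermite polynomial. -/
noncomputable def hermiteFun (n : ℕ) (x : ℝ) : ℝ :=
  (Real.sqrt (2 ^ n * n.factorial * Real.sqrt Real.pi))⁻¹ * Real.exp (-x ^ 2 / 2) *
    ((2 : ℝ) ^ ((n : ℝ) / 2) * Polynomial.aeval (x * Real.sqrt 2) (Polynomial.hermite n))

noncomputable def wfQ (m : ℕ) : Polynomial ℝ := (Polynomial.hermite m).map (Int.castRingHom ℝ)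
noncomputable def wfc (m : ℕ) : ℝ :=
  (Real.sqrt (2 ^ m * m.factorial * Real.sqrt Real.pi))⁻¹ * (2:ℝ) ^ ((m:ℝ)/2)

open Polynomial in
lemma wf_derivative_hermite (n : ℕ) :
    derivative (hermite (n + 1)) = (n + 1 : ℤ) • hermite n := by
  induction n with
  | zero => simp [hermite_one, hermite_zero]
  | succ n ih =>
    rw [hermite_succ (n+1), derivative_sub, derivative_mul, derivative_X, one_mul, ih,
      derivative_smul, hermite_succ n]
    simp only [zsmul_eq_mul]; push_cast; ring



lemma wfQ_succ (m : ℕ) :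
    wfQ (m+1) = Polynomial.X * wfQ m - Polynomial.derivative (wfQ m) := by
  simp [wfQ, Polynomial.hermite_succ, Polynomial.derivative_map]

lemma wf_derivative_wfQ (m : ℕ) :
    Polynomial.derivative (wfQ (m+1)) = ((m : ℝ) + 1) • wfQ m := by
  rw [wfQ, Polynomial.derivative_map, wf_derivative_hermite, ← Polynomial.coe_mapRingHom,
    map_zsmul, Polynomial.coe_mapRingHom, ← wfQ, ← Int.cast_smul_eq_zsmul ℝ]
  norm_num


noncomputable def wfD (m : ℕ) (y : ℝ) : ℝ :=
  wfc m * (Real.sqrt 2 * (Polynomial.derivative (wfQ m)).eval (y * Real.sqrt 2) * Real.exp (-y^2/2)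
    - y * ((wfQ m).eval (y * Real.sqrt 2) * Real.exp (-y^2/2)))

lemma hermiteFun_eq (m : ℕ) (y : ℝ) :
    hermiteFun m y = wfc m * ((wfQ m).eval (y * Real.sqrt 2) * Real.exp (-y^2/2)) := by
  rw [hermiteFun, wfc, wfQ, Polynomial.eval_map,
    show (Int.castRingHom ℝ) = algebraMap ℤ ℝ from rfl, ← Polynomial.aeval_def]
  ring

lemma hasDerivAt_hermiteFun (m : ℕ) (y : ℝ) :
    HasDerivAt (hermiteFun m) (wfD m y) y := by
  have h1 : HasDerivAt (fun y : ℝ => (wfQ m).eval (y * Real.sqrt 2))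
      ((Polynomial.derivative (wfQ m)).eval (y * Real.sqrt 2) * Real.sqrt 2) y :=
    by have := ((wfQ m).hasDerivAt (y * Real.sqrt 2)).comp y (hasDerivAt_mul_const (Real.sqrt 2)); exact this
  have h2 : HasDerivAt (fun y : ℝ => Real.exp (-y^2/2)) (-y * Real.exp (-y^2/2)) y := by
    have h3 : HasDerivAt (fun y : ℝ => -y^2/2) (-y) y := by
      have := ((hasDerivAt_pow 2 y).neg).div_const 2
      simpa using this.congr_deriv (by ring)
    simpa [mul_comm] using h3.exp
  have := ((h1.mul h2).const_mul (wfc m)).congr_deriv (show _ = wfD m y by rw [wfD]; ring)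
  refine HasDerivAt.congr_of_eventuallyEq this ?_
  filter_upwards with z
  rw [hermiteFun_eq]
  rfl

lemma wfc_pos (m : ℕ) : 0 < wfc m := by
  rw [wfc]
  have h1 : (0:ℝ) < 2 ^ m * m.factorial * Real.sqrt π := by positivity
  positivity

lemma wfc_succ (m : ℕ) :
    wfc (m+1) * Real.sqrt (2*((m:ℝ)+1)) = Real.sqrt 2 * wfc m := by
  have hS : (0:ℝ) < 2 ^ m * m.factorial * Real.sqrt π := by positivity
  have harg : (2:ℝ) ^ (m+1) * ((m+1).factorial : ℝ) * Real.sqrt π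
      = (2*((m:ℝ)+1)) * (2^m * m.factorial * Real.sqrt π) := by
    rw [Nat.factorial_succ]; push_cast; ring
  have hc2 : (2:ℝ) ^ ((((m:ℕ)+1 : ℕ) : ℝ)/2) = (2:ℝ)^((m:ℝ)/2) * Real.sqrt 2 := by
    rw [Real.sqrt_eq_rpow, ← Real.rpow_add two_pos]
    norm_num
    ring_nf
  rw [wfc, wfc, harg, Real.sqrt_mul (by positivity), hc2]
  have hT : Real.sqrt (2*((m:ℝ)+1)) ≠ 0 := by positivity
  have hS' : Real.sqrt (2 ^ m * m.factorial * Real.sqrt π) ≠ 0 := by positivity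
  field_simp

lemma wfR1 (m : ℕ) (x : ℝ) :
    x * hermiteFun (m+1) x + wfD (m+1) x
      = Real.sqrt (2*((m:ℝ)+1)) * hermiteFun m x := by
  have hd := wf_derivative_wfQ m
  have h2 : Real.sqrt 2 * Real.sqrt 2 = 2 := Real.mul_self_sqrt (by norm_num)
  have hT : Real.sqrt (2*((m:ℝ)+1)) * Real.sqrt (2*((m:ℝ)+1)) = 2*((m:ℝ)+1) :=
    Real.mul_self_sqrt (by positivity)
  have hc := wfc_succ m
  rw [hermiteFun_eq, hermiteFun_eq, wfD, hd]
  simp only [Polynomial.eval_smul, smul_eq_mul]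
  -- scalar identity
  have h20 : Real.sqrt 2 ≠ 0 := by positivity
  have hs : wfc (m+1) * Real.sqrt 2 * ((m:ℝ)+1) = Real.sqrt (2*((m:ℝ)+1)) * wfc m := by
    apply mul_left_cancel₀ h20
    linear_combination (((m:ℝ)+1) * wfc (m+1)) * h2 + Real.sqrt (2*((m:ℝ)+1)) * hc
      - wfc (m+1) * hT
  linear_combination ((wfQ m).eval (x * Real.sqrt 2) * Real.exp (-x^2/2)) * hs

lemma wfR2 (m : ℕ) (x : ℝ) :
    x * hermiteFun m x - wfD m x
      = Real.sqrt (2*((m:ℝ)+1)) * hermiteFun (m+1) x := by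
  have h2 : Real.sqrt 2 * Real.sqrt 2 = 2 := Real.mul_self_sqrt (by norm_num)
  have hc := wfc_succ m
  have hq : (wfQ (m+1)).eval (x*Real.sqrt 2)
      = (x*Real.sqrt 2) * (wfQ m).eval (x*Real.sqrt 2)
        - (Polynomial.derivative (wfQ m)).eval (x*Real.sqrt 2) := by
    rw [wfQ_succ]; simp
  rw [hermiteFun_eq, hermiteFun_eq, wfD, hq]
  linear_combination (((Polynomial.derivative (wfQ m)).eval (x*Real.sqrt 2)
      - x*Real.sqrt 2*(wfQ m).eval (x*Real.sqrt 2)) * Real.exp (-x^2/2)) * hc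
    - (x * wfc m * (wfQ m).eval (x*Real.sqrt 2) * Real.exp (-x^2/2)) * h2

lemma wf_abs_rpow_nat (x : ℝ) (n : ℕ) : |x| ^ n ≤ |x ^ (n:ℝ)| := by
  rcases le_or_gt 0 x with hx | hx
  · rw [Real.rpow_natCast, _root_.abs_pow]
  · rw [Real.rpow_def_of_neg hx, abs_mul]
    have hlog : Real.log x = Real.log |x| := by
      rw [abs_of_neg hx, Real.log_neg_eq_log]
    have hcos : |Real.cos ((n:ℝ) * π)| = 1 := by
      have := Real.abs_cos_int_mul_pi (n : ℤ)
      push_cast at this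
      exact this
    rw [hcos, mul_one, hlog, ← Real.rpow_def_of_pos (abs_pos.mpr hx.ne),
      Real.rpow_natCast, _root_.abs_of_nonneg (pow_nonneg (abs_nonneg x) n)]

lemma wf_integrable_pow_mul_gaussian {b : ℝ} (hb : 0 < b) (n : ℕ) :
    Integrable fun x : ℝ => x ^ n * Real.exp (-b * x ^ 2) := by
  have hs : (-1:ℝ) < n := lt_of_lt_of_le (by norm_num) (Nat.cast_nonneg n)
  refine ((integrable_rpow_mul_exp_neg_mul_sq hb hs).abs).mono' ?_ ?_
  · exact (((measurable_id.pow_const n).mul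
      ((measurable_id.pow_const 2).const_mul (-b)).exp)).aestronglyMeasurable
  · filter_upwards with x
    rw [Real.norm_eq_abs, abs_mul, abs_mul, _root_.abs_of_nonneg (Real.exp_pos _).le, _root_.abs_pow]
    exact mul_le_mul_of_nonneg_right (wf_abs_rpow_nat x n) (Real.exp_pos _).le

lemma wf_integrable_poly_mul_gaussian (p : Polynomial ℝ) {b : ℝ} (hb : 0 < b) :
    Integrable fun x : ℝ => p.eval x * Real.exp (-b * x ^ 2) := by
  induction p using Polynomial.induction_on' with
  | add p q hp hq => simpa [add_mul, Pi.add_def] using hp.add hq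
  | monomial n a =>
    simpa [Polynomial.eval_monomial, mul_assoc] using
      (wf_integrable_pow_mul_gaussian hb n).const_mul a

lemma wf_integrable_prod (m l : ℕ) (x : ℝ) :
    Integrable fun s : ℝ => hermiteFun m (x + s/2) * hermiteFun l (x - s/2) := by
  have key : ∀ s : ℝ, hermiteFun m (x + s/2) * hermiteFun l (x - s/2)
      = (Polynomial.C (wfc m * wfc l * Real.exp (-x^2)) *
         ((wfQ m).comp (Polynomial.C (x*Real.sqrt 2) + Polynomial.C (Real.sqrt 2/2) * Polynomial.X)) *
         ((wfQ l).comp (Polynomial.C (x*Real.sqrt 2) - Polynomial.C (Real.sqrt 2/2) * Polynomial.X))).eval s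
        * Real.exp (-(1/4:ℝ) * s^2) := by
    intro s
    have hE : Real.exp (-(x+s/2)^2/2) * Real.exp (-(x-s/2)^2/2)
        = Real.exp (-x^2) * Real.exp (-(1/4:ℝ)*s^2) := by
      rw [← Real.exp_add, ← Real.exp_add]; congr 1; ring
    rw [hermiteFun_eq, hermiteFun_eq]
    simp only [Polynomial.eval_mul, Polynomial.eval_comp, Polynomial.eval_add,
      Polynomial.eval_sub, Polynomial.eval_C, Polynomial.eval_X]
    have harg1 : (x + s/2) * Real.sqrt 2 = x*Real.sqrt 2 + Real.sqrt 2/2 * s := by ring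
    have harg2 : (x - s/2) * Real.sqrt 2 = x*Real.sqrt 2 - Real.sqrt 2/2 * s := by ring
    rw [harg1, harg2]
    linear_combination (wfc m * wfc l * (wfQ m).eval (x*Real.sqrt 2 + Real.sqrt 2/2 * s)
      * (wfQ l).eval (x*Real.sqrt 2 - Real.sqrt 2/2 * s)) * hE
  rw [funext key]
  exact wf_integrable_poly_mul_gaussian _ (by norm_num)

lemma wf_norm_exp (k s : ℝ) : ‖Complex.exp (-Complex.I * k * s)‖ = 1 := by
  rw [show -Complex.I * k * s = ((-(k*s) : ℝ) : ℂ) * Complex.I by push_cast; ring,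
    Complex.norm_exp_ofReal_mul_I]

lemma wf_integrable_mul_exp {w : ℝ → ℝ} (hw : Integrable w) (k : ℝ) :
    Integrable fun s : ℝ => ((w s : ℝ) : ℂ) * Complex.exp (-Complex.I * k * s) := by
  refine hw.norm.mono' ?_ ?_
  · exact (Complex.continuous_ofReal.comp_aestronglyMeasurable hw.1).mul
      (Continuous.aestronglyMeasurable (by fun_prop))
  · filter_upwards with s
    rw [norm_mul, wf_norm_exp, mul_one, Complex.norm_real]

open FourierTransform in
lemma wf_ibp {u u' : ℝ → ℝ} (hu : Integrable u) (hdiff : ∀ s, HasDerivAt u (u' s) s)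
    (hu' : Integrable u') (k : ℝ) :
    ∫ s : ℝ, ((u' s : ℝ) : ℂ) * Complex.exp (-Complex.I * k * s)
      = Complex.I * k * ∫ s : ℝ, ((u s : ℝ) : ℂ) * Complex.exp (-Complex.I * k * s) := by
  set U : ℝ → ℂ := fun s => (u s : ℂ) with hUdef
  have hU : Integrable U := hu.ofReal
  have hdU : ∀ s, HasDerivAt U ((u' s : ℂ)) s := fun s => (hdiff s).ofReal_comp
  have hUdiff : Differentiable ℝ U := fun s => (hdU s).differentiableAt
  have hderiv : deriv U = fun s => ((u' s : ℝ) : ℂ) := funext fun s => (hdU s).deriv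
  have hU' : Integrable (deriv U) := by rw [hderiv]; exact hu'.ofReal
  have key : 𝓕 (deriv U) (k/(2*π)) = ((2:ℂ) * π * Complex.I * ((k/(2*π) : ℝ) : ℂ)) • 𝓕 U (k/(2*π)) := by
    rw [Real.fourier_deriv hU hUdiff hU']
  have hexp : ∀ v : ℝ, Complex.exp (((-2 * π * (v * (k/(2*π))) : ℝ) : ℂ) * Complex.I)
      = Complex.exp (-Complex.I * k * v) := by
    intro v
    congr 1
    have h : (-2:ℝ) * π * (v * (k / (2*π))) = -(k*v) := by
      field_simp
    rw [h]
    push_cast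
    ring
  have e1 : 𝓕 (deriv U) (k/(2*π)) = ∫ s : ℝ, ((u' s : ℝ) : ℂ) * Complex.exp (-Complex.I*k*s) := by
    rw [hderiv, Real.fourier_eq']
    refine integral_congr_ae (Filter.Eventually.of_forall fun v => ?_)
    simp only [smul_eq_mul, RCLike.inner_apply, conj_trivial]
    rw [mul_comm (k/(2*π)) v, hexp v, mul_comm]
  have e2 : 𝓕 U (k/(2*π)) = ∫ s : ℝ, ((u s : ℝ) : ℂ) * Complex.exp (-Complex.I*k*s) := by
    rw [Real.fourier_eq']
    refine integral_congr_ae (Filter.Eventually.of_forall fun v => ?_)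
    simp only [smul_eq_mul, RCLike.inner_apply, conj_trivial]
    rw [mul_comm (k/(2*π)) v, hexp v, mul_comm]
  rw [e1, e2] at key
  rw [key, smul_eq_mul]
  have hπ : ((π : ℝ) : ℂ) ≠ 0 := Complex.ofReal_ne_zero.mpr Real.pi_ne_zero
  congr 1
  push_cast
  field_simp

lemma wf_u_hasDerivAt (m : ℕ) (x : ℝ) (s : ℝ) :
    HasDerivAt (fun s : ℝ => hermiteFun (m+1) (x + s/2) * hermiteFun m (x - s/2))
      (Real.sqrt (2*((m:ℝ)+1))/2 *
        (hermiteFun m (x+s/2) * hermiteFun m (x-s/2)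
          + hermiteFun (m+1) (x+s/2) * hermiteFun (m+1) (x-s/2))
        - x * (hermiteFun (m+1) (x+s/2) * hermiteFun m (x-s/2))) s := by
  have ha : HasDerivAt (fun s : ℝ => x + s/2) (1/2) s := by
    simpa using ((hasDerivAt_id s).div_const 2).const_add x
  have hb : HasDerivAt (fun s : ℝ => x - s/2) (-(1/2)) s := by
    simpa using ((hasDerivAt_id s).div_const 2).const_sub x
  have h1 : HasDerivAt (fun s : ℝ => hermiteFun (m+1) (x + s/2))
      (wfD (m+1) (x+s/2) * (1/2)) s :=
    by have := (hasDerivAt_hermiteFun (m+1) (x+s/2)).comp s ha; exact this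
  have h2 : HasDerivAt (fun s : ℝ => hermiteFun m (x - s/2))
      (wfD m (x-s/2) * (-(1/2))) s :=
    by have := (hasDerivAt_hermiteFun m (x-s/2)).comp s hb; exact this
  refine (h1.mul h2).congr_deriv ?_
  have r1 := wfR1 m (x+s/2)
  have r2 := wfR2 m (x-s/2)
  linear_combination (hermiteFun m (x-s/2) / 2) * r1 + (hermiteFun (m+1) (x+s/2) / 2) * r2

lemma wf_integral_combo {p q u : ℝ → ℝ} (hp : Integrable p) (hq : Integrable q)
    (hu : Integrable u) (c x k : ℝ) :
    ∫ s : ℝ, ((c * (p s + q s) - x * u s : ℝ) : ℂ) * Complex.exp (-Complex.I * k * s)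
      = (c:ℂ) * ((∫ s : ℝ, ((p s : ℝ):ℂ) * Complex.exp (-Complex.I*k*s))
          + ∫ s : ℝ, ((q s : ℝ):ℂ) * Complex.exp (-Complex.I*k*s))
        - (x:ℂ) * ∫ s : ℝ, ((u s : ℝ):ℂ) * Complex.exp (-Complex.I*k*s) := by
  have hip := wf_integrable_mul_exp hp k
  have hiq := wf_integrable_mul_exp hq k
  have hiu := wf_integrable_mul_exp hu k
  have key : ∀ s : ℝ, ((c * (p s + q s) - x * u s : ℝ) : ℂ) * Complex.exp (-Complex.I*k*s)
      = (c:ℂ) * (((p s : ℝ):ℂ) * Complex.exp (-Complex.I*k*s))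
        + (c:ℂ) * (((q s : ℝ):ℂ) * Complex.exp (-Complex.I*k*s))
        - (x:ℂ) * (((u s : ℝ):ℂ) * Complex.exp (-Complex.I*k*s)) := by
    intro s; push_cast; ring
  rw [funext key, integral_sub, integral_add, integral_const_mul, integral_const_mul,
    integral_const_mul]
  · ring
  · exact hip.const_mul _
  · exact hiq.const_mul _
  · exact (hip.const_mul _).add (hiq.const_mul _)
  · exact hiu.const_mul _

/-- The diagonal Wigner function `g_m` of the `m`-th Hermite function. -/
noncomputable def wignerDiag (m : ℕ) (x k : ℝ) : ℂ :=
  (((2 * Real.pi)⁻¹ : ℝ) : ℂ) *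
    ∫ s : ℝ, ((hermiteFun m (x + s / 2) * hermiteFun m (x - s / 2) : ℝ) : ℂ) *
      Complex.exp (-Complex.I * k * s)

/-- The cross Wigner function `h_n` of the Hermite functions `f_n` and `f_{n−1}`. -/
noncomputable def wignerCross (n : ℕ) (x k : ℝ) : ℂ :=
  (((2 * Real.pi)⁻¹ : ℝ) : ℂ) *
    ∫ s : ℝ, ((hermiteFun n (x + s / 2) * hermiteFun (n - 1) (x - s / 2) : ℝ) : ℂ) *
      Complex.exp (-Complex.I * k * s)

/-- Closed form for the off-diagonal Wigner matrix element: away from the phase-space origin,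
`h_n(x,k) = √(n/2)·((x − ik)/(x² + k²))·(g_n(x,k) + g_{n−1}(x,k))`. -/
theorem wignerCross_closed_form (n : ℕ) (hn : 1 ≤ n) :
    ∀ x k : ℝ, (x, k) ≠ (0, 0) →
      wignerCross n x k =
        ((Real.sqrt (n / 2) : ℝ) : ℂ) *
          (((x : ℂ) - Complex.I * (k : ℂ)) / (((x ^ 2 + k ^ 2 : ℝ)) : ℂ)) *
          (wignerDiag n x k + wignerDiag (n - 1) x k) := by
  obtain ⟨m, rfl⟩ : ∃ m, n = m + 1 := ⟨n - 1, (Nat.succ_pred_eq_of_pos hn).symm⟩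
  intro x k hxk
  have hxk' : ¬(x = 0 ∧ k = 0) := by
    rintro ⟨h1, h2⟩; exact hxk (by simp [h1, h2])
  have hu : Integrable (fun s : ℝ => hermiteFun (m+1) (x + s/2) * hermiteFun m (x - s/2)) :=
    wf_integrable_prod (m+1) m x
  have hp : Integrable (fun s : ℝ => hermiteFun m (x + s/2) * hermiteFun m (x - s/2)) :=
    wf_integrable_prod m m x
  have hq : Integrable (fun s : ℝ =>
      hermiteFun (m+1) (x + s/2) * hermiteFun (m+1) (x - s/2)) :=
    wf_integrable_prod (m+1) (m+1) x
  have hibp := wf_ibp hu (fun s => wf_u_hasDerivAt m x s)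
    (((hp.add hq).const_mul _).sub (hu.const_mul x)) k
  have hcombo := wf_integral_combo hp hq hu (Real.sqrt (2*((m:ℝ)+1))/2) x k
  set Ip := ∫ s : ℝ, ((hermiteFun m (x + s/2) * hermiteFun m (x - s/2) : ℝ) : ℂ) *
      Complex.exp (-Complex.I*k*s) with hIp
  set Iq := ∫ s : ℝ, ((hermiteFun (m+1) (x + s/2) * hermiteFun (m+1) (x - s/2) : ℝ) : ℂ) *
      Complex.exp (-Complex.I*k*s) with hIq
  set Iu := ∫ s : ℝ, ((hermiteFun (m+1) (x + s/2) * hermiteFun m (x - s/2) : ℝ) : ℂ) *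
      Complex.exp (-Complex.I*k*s) with hIu
  have h1 : Complex.I * k * Iu
      = ((Real.sqrt (2*((m:ℝ)+1))/2 : ℝ) : ℂ) * (Ip + Iq) - (x:ℂ) * Iu :=
    hibp.symm.trans hcombo
  have hKey : ((x:ℂ) + Complex.I * k) * Iu
      = ((Real.sqrt (2*((m:ℝ)+1))/2 : ℝ) : ℂ) * (Ip + Iq) := by
    linear_combination h1
  -- nonvanishing
  have hz : ((x:ℂ) + Complex.I * k) ≠ 0 := by
    intro h
    exact hxk' ⟨by simpa using congrArg Complex.re h, by simpa using congrArg Complex.im h⟩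
  have hx2pos : (0:ℝ) < x^2 + k^2 := by
    rcases not_and_or.mp hxk' with h | h
    · positivity
    · positivity
  have hx2 : ((x^2 + k^2 : ℝ) : ℂ) ≠ 0 := Complex.ofReal_ne_zero.mpr hx2pos.ne'
  have hinv : (((x : ℂ) - Complex.I * (k : ℂ)) / (((x ^ 2 + k ^ 2 : ℝ)) : ℂ))
      = ((x:ℂ) + Complex.I * k)⁻¹ := by
    refine eq_inv_of_mul_eq_one_left ?_
    rw [div_mul_eq_mul_div, div_eq_one_iff_eq hx2]
    push_cast
    linear_combination -(k:ℂ)^2 * Complex.I_sq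
  have hCcast : ((Real.sqrt (2*((m:ℝ)+1))/2 : ℝ) : ℂ)
      = ((Real.sqrt ((((m+1):ℕ) : ℝ) / 2) : ℝ) : ℂ) := by
    congr 1
    rw [show (2*((m:ℝ)+1)) = ((((m+1):ℕ):ℝ)/2) * 4 by push_cast; ring,
      Real.sqrt_mul (by positivity),
      show Real.sqrt 4 = 2 by rw [show (4:ℝ) = 2^2 by norm_num, Real.sqrt_sq (by norm_num)]]
    ring
  rw [hCcast] at hKey
  have hend : wignerCross (m+1) x k
      = (((2 * Real.pi)⁻¹ : ℝ) : ℂ) * Iu := by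
    rw [wignerCross]
    simp only [Nat.add_sub_cancel]
    rfl
  have hd1 : wignerDiag (m+1) x k = (((2 * Real.pi)⁻¹ : ℝ) : ℂ) * Iq := rfl
  have hd0 : wignerDiag m x k = (((2 * Real.pi)⁻¹ : ℝ) : ℂ) * Ip := rfl
  simp only [Nat.add_sub_cancel]
  rw [hend, hd1, hd0, hinv]
  apply mul_left_cancel₀ hz
  have hzz : ((x:ℂ) + Complex.I*k) * ((x:ℂ) + Complex.I*k)⁻¹ = 1 := mul_inv_cancel₀ hz
  linear_combination (((2 * Real.pi)⁻¹ : ℝ) : ℂ) * hKey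
    - (((Real.sqrt ((((m+1):ℕ):ℝ)/2) : ℝ) : ℂ) *
        ((((2 * Real.pi)⁻¹ : ℝ) : ℂ) * Iq + (((2 * Real.pi)⁻¹ : ℝ) : ℂ) * Ip)) * hzz
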